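/- Let A have full column rank, x = (AᵀA)^{-1}Aᵀb ≠ 0, r = b − Ax, κ = ‖A‖₂/σ_min(A), v = ‖Ax‖₂/(‖x‖₂σ_min(A)), tan θ = ‖r‖₂/‖Ax‖₂. Define χ_x(A) = (‖A‖₂/‖x‖₂) · max over unit Δx of the nuclear norm of r((AᵀA)^{-1}Δx)ᵀ − A(AᵀA)^{-1}Δx xᵀ. Then κ√((v tan θ)² + 1) ≤ χ_x(A) ≤ κ(v tan θ + 1). -/

import Mathlib

open Matrix BigOperators

/-- Euclidean 2-norm of a vector in `ℝ^n`. -/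
noncomputable def enorm {n : ℕ} (x : Fin n → ℝ) : ℝ := Real.sqrt (∑ i, x i ^ 2)

/-- Frobenius norm of a real matrix. -/
noncomputable def frobNorm {m n : ℕ} (M : Matrix (Fin m) (Fin n) ℝ) : ℝ :=
  Real.sqrt (∑ i, ∑ j, M i j ^ 2)

/-- The singular values of a real `m × n` matrix: square roots of the eigenvalues of `Aᵀ A`
(for real matrices `Aᴴ = Aᵀ`). -/
noncomputable def singVal {m n : ℕ} (A : Matrix (Fin m) (Fin n) ℝ) (i : Fin n) : ℝ :=
  Real.sqrt ((show (Aᵀ * A).IsHermitian by simpa using Matrix.isHermitian_conjTranspose_mul_self A).eigenvalues i)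

/-- Nuclear (trace) norm: the sum of the singular values with multiplicity. -/
noncomputable def nuclearNorm {m n : ℕ} (A : Matrix (Fin m) (Fin n) ℝ) : ℝ :=
  ∑ i, singVal A i

/-- Spectral norm (operator 2-norm): sup of `‖A x‖₂` over Euclidean unit vectors `x`. -/
noncomputable def specNorm {m n : ℕ} (A : Matrix (Fin m) (Fin n) ℝ) : ℝ :=
  sSup {c | ∃ x : Fin n → ℝ, _root_.enorm x = 1 ∧ c = _root_.enorm (A.mulVec x)}

/-- Smallest singular value of a real `m × n` matrix. -/
noncomputable def sigmaMin {m n : ℕ} (A : Matrix (Fin m) (Fin n) ℝ) : ℝ :=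
  Real.sqrt (⨅ i : Fin n, (show (Aᵀ * A).IsHermitian by simpa using Matrix.isHermitian_conjTranspose_mul_self A).eigenvalues i)

/-!
For `y = (AᵀA)⁻¹Δx` and `w = Ay` the matrix `M = r yᵀ - w xᵀ` has rank at most two, and since
`Aᵀ r = 0`, `MᵀM = ‖r‖² y yᵀ + ‖w‖² x xᵀ`. The two singular values of `M` are therefore determined
by `tr (MᵀM)` and `tr ((MᵀM)²)`, which gives
`‖M‖_*² = ‖r‖²‖y‖² + ‖w‖²‖x‖² + 2‖r‖‖w‖√(‖y‖²‖x‖² - (y·x)²)`, so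
`√(‖r‖²‖y‖² + ‖w‖²‖x‖²) ≤ ‖M‖_* ≤ ‖r‖‖y‖ + ‖w‖‖x‖`.
For unit `Δx` the Rayleigh bound `σ_min²‖y‖² ≤ ‖w‖² = y·Δx ≤ ‖y‖` gives `‖y‖ ≤ σ_min⁻²` and
`‖w‖ ≤ σ_min⁻¹`, with equality when `Δx` is a unit eigenvector of `AᵀA` for `σ_min²`. Hence the
maximum lies between `√(‖r‖²/σ_min⁴ + ‖x‖²/σ_min²)` and `‖r‖/σ_min² + ‖x‖/σ_min`; multiplying by
`‖A‖₂/‖x‖₂` gives the two bounds.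
-/

-- Mathlib exports an `ENNReal`-valued `enorm`, so the bare name `enorm` is ambiguous.
local notation "‖" v "‖₂" => @_root_.enorm _ v

namespace Matrix.IsHermitian

variable {n : Type*} [Fintype n] [DecidableEq n] {C : Matrix n n ℝ}

lemma sum_eigenvalues (hC : C.IsHermitian) : ∑ i, hC.eigenvalues i = C.trace := by
  simp [hC.trace_eq_sum_eigenvalues]

lemma sum_eigenvalues_sq (hC : C.IsHermitian) : ∑ i, hC.eigenvalues i ^ 2 = (C * C).trace := by
  conv_rhs => rw [hC.spectral_theorem, ← map_mul, Unitary.conjStarAlgAut_apply, trace_mul_cycle,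
    Unitary.coe_star_mul_self, one_mul, diagonal_mul_diagonal, trace_diagonal]
  simp [sq]

lemma iInf_eigenvalues_mul_dotProduct_self_le (hC : C.IsHermitian) (u : n → ℝ) :
    (⨅ i, hC.eigenvalues i) * (u ⬝ᵥ u) ≤ u ⬝ᵥ C *ᵥ u := by
  have hpsd : (C - algebraMap ℝ _ (⨅ i, hC.eigenvalues i)).PosSemidef := by
    refine posSemidef_iff_isHermitian_and_spectrum_nonneg.mpr
      ⟨hC.sub (isHermitian_diagonal _), ?_⟩
    rw [← spectrum.sub_singleton_eq, hC.spectrum_eq_image_range]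
    rintro _ ⟨_, ⟨_, ⟨i, rfl⟩, rfl⟩, _, rfl, rfl⟩
    exact sub_nonneg.mpr (ciInf_le (Set.finite_range hC.eigenvalues).bddBelow i)
  have := hpsd.dotProduct_mulVec_nonneg u
  rw [Algebra.algebraMap_eq_smul_one, star_trivial, sub_mulVec, dotProduct_sub, smul_mulVec,
    one_mulVec, dotProduct_smul, smul_eq_mul] at this
  linarith

end Matrix.IsHermitian

-- With `p, q` the nonzero entries, `(√p + √q)² = p + q + 2√(pq)` and `2pq = (p + q)² - (p² + q²)`.
open Finset in
lemma sq_sum_sqrt_eq_of_card_ne_zero_le_two {ι : Type*} [Fintype ι] {μ : ι → ℝ}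
    (hμ : ∀ i, 0 ≤ μ i) (hcard : Fintype.card {i // μ i ≠ 0} ≤ 2) :
    (∑ i, √(μ i)) ^ 2 = ∑ i, μ i + √(2 * ((∑ i, μ i) ^ 2 - ∑ i, μ i ^ 2)) := by
  classical
  have restrict : ∀ f : ℝ → ℝ, f 0 = 0 → ∑ i, f (μ i) = ∑ i with μ i ≠ 0, f (μ i) :=
    fun f hf => (sum_filter_of_ne (p := (μ · ≠ 0)) fun i _ hfi hi => hfi (by rw [hi, hf])).symm
  rw [restrict _ Real.sqrt_zero, restrict (fun t => t) rfl, restrict (· ^ 2) (by norm_num)]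
  rw [Fintype.card_subtype] at hcard
  interval_cases h : #{i | μ i ≠ 0}
  · simp [card_eq_zero.mp h]
  · obtain ⟨p, hp⟩ := card_eq_one.mp h
    simp [hp, Real.sq_sqrt (hμ p)]
  · obtain ⟨p, q, hpq, hs⟩ := card_eq_two.mp h
    have hpq' : 2 * ((μ p + μ q) ^ 2 - (μ p ^ 2 + μ q ^ 2)) = (2 * √(μ p) * √(μ q)) ^ 2 := by
      rw [mul_pow, mul_pow, Real.sq_sqrt (hμ p), Real.sq_sqrt (hμ q)]
      ring
    simp only [hs, sum_pair hpq, hpq', Real.sqrt_sq (by positivity : 0 ≤ 2 * √(μ p) * √(μ q))]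
    rw [add_sq, Real.sq_sqrt (hμ p), Real.sq_sqrt (hμ q)]
    ring

namespace Matrix

lemma posSemidef_transpose_mul_self {m n : Type*} [Fintype m] [Fintype n] (A : Matrix m n ℝ) :
    (Aᵀ * A).PosSemidef := by
  simpa using posSemidef_conjTranspose_mul_self A

lemma mulVec_injective_of_rank_eq_card {K m n : Type*} [Field K] [Fintype n]
    {A : Matrix m n K} (hA : A.rank = Fintype.card n) : Function.Injective A.mulVec := by
  have hdim := LinearMap.finrank_range_add_finrank_ker A.mulVecLin
  rw [show Module.finrank K (LinearMap.range A.mulVecLin) = A.rank from rfl, hA,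
    Module.finrank_fintype_fun_eq_card] at hdim
  exact LinearMap.ker_eq_bot.mp (Submodule.finrank_eq_zero.mp (by omega :
    Module.finrank K (LinearMap.ker A.mulVecLin) = 0))

lemma rank_vecMulVec_sub_vecMulVec_le_two {K m n : Type*} [Field K] [Fintype n]
    (r w : m → K) (y x : n → K) : (vecMulVec r y - vecMulVec w x).rank ≤ 2 := by
  have hfactor : vecMulVec r y - vecMulVec w x = (of ![r, -w])ᵀ * of ![y, x] := by
    ext i j
    simp [mul_apply, Fin.sum_univ_two, vecMulVec_apply, sub_eq_add_neg]
  rw [hfactor]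
  exact (rank_mul_le_right _ _).trans ((rank_le_card_height _).trans_eq (Fintype.card_fin 2))

lemma transpose_mul_self_vecMulVec_sub_vecMulVec {R m n : Type*} [CommRing R] [Fintype m]
    {r w : m → R} (y x : n → R) (h : r ⬝ᵥ w = 0) :
    (vecMulVec r y - vecMulVec w x)ᵀ * (vecMulVec r y - vecMulVec w x) =
      (r ⬝ᵥ r) • vecMulVec y y + (w ⬝ᵥ w) • vecMulVec x x := by
  rw [transpose_sub, transpose_vecMulVec, transpose_vecMulVec, Matrix.sub_mul, Matrix.mul_sub,
    Matrix.mul_sub]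
  simp only [vecMulVec_mul_vecMulVec, h, dotProduct_comm w r, zero_smul, vecMulVec_zero,
    vecMulVec_smul]
  abel

end Matrix

section EuclideanNorm

variable {n : ℕ}

lemma enorm_nonneg (v : Fin n → ℝ) : 0 ≤ ‖v‖₂ := Real.sqrt_nonneg _

lemma enorm_sq (v : Fin n → ℝ) : ‖v‖₂ ^ 2 = v ⬝ᵥ v := by
  rw [_root_.enorm, Real.sq_sqrt (by positivity)]
  simp [dotProduct, sq]

lemma enorm_pos_of_ne_zero {v : Fin n → ℝ} (hv : v ≠ 0) : 0 < ‖v‖₂ := by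
  refine Real.sqrt_pos.mpr (lt_of_le_of_ne (by positivity) (Ne.symm ?_))
  simpa [← sq, dotProduct] using mt dotProduct_self_eq_zero.mp hv

lemma dotProduct_le_enorm_mul_enorm (u v : Fin n → ℝ) : u ⬝ᵥ v ≤ ‖u‖₂ * ‖v‖₂ :=
  Real.sum_mul_le_sqrt_mul_sqrt _ u v

lemma enorm_ofLp (v : EuclideanSpace ℝ (Fin n)) : ‖v.ofLp‖₂ = ‖v‖ := by
  simp [_root_.enorm, EuclideanSpace.norm_eq]

end EuclideanNorm

section NuclearNorm

variable {m n : ℕ}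

lemma nuclearNorm_nonneg (M : Matrix (Fin m) (Fin n) ℝ) : 0 ≤ nuclearNorm M :=
  Finset.sum_nonneg fun _ _ => Real.sqrt_nonneg _

lemma nuclearNorm_sq_of_rank_le_two (M : Matrix (Fin m) (Fin n) ℝ) (hM : M.rank ≤ 2) :
    nuclearNorm M ^ 2 =
      (Mᵀ * M).trace + √(2 * ((Mᵀ * M).trace ^ 2 - (Mᵀ * M * (Mᵀ * M)).trace)) := by
  have hpsd := posSemidef_transpose_mul_self M
  rw [← hpsd.1.sum_eigenvalues, ← hpsd.1.sum_eigenvalues_sq]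
  refine sq_sum_sqrt_eq_of_card_ne_zero_le_two hpsd.eigenvalues_nonneg ?_
  rwa [← hpsd.1.rank_eq_card_non_zero_eigs, rank_transpose_mul_self]

variable {r w : Fin m → ℝ} (y x : Fin n → ℝ)

lemma nuclearNorm_vecMulVec_sub_vecMulVec_sq (h : r ⬝ᵥ w = 0) :
    nuclearNorm (vecMulVec r y - vecMulVec w x) ^ 2 =
      (r ⬝ᵥ r) * (y ⬝ᵥ y) + (w ⬝ᵥ w) * (x ⬝ᵥ x) +
        2 * √((r ⬝ᵥ r) * (w ⬝ᵥ w) * ((y ⬝ᵥ y) * (x ⬝ᵥ x) - (y ⬝ᵥ x) ^ 2)) := by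
  rw [nuclearNorm_sq_of_rank_le_two _ (rank_vecMulVec_sub_vecMulVec_le_two r w y x),
    transpose_mul_self_vecMulVec_sub_vecMulVec y x h]
  simp only [add_mul, mul_add, smul_mul_smul_comm, vecMulVec_mul_vecMulVec, trace_add,
    trace_smul, trace_vecMulVec, smul_eq_mul, dotProduct_smul, dotProduct_comm x y]
  have two_mul_sqrt (t : ℝ) : 2 * √t = √(4 * t) := by
    rw [Real.sqrt_mul zero_le_four, show (4 : ℝ) = 2 ^ 2 by norm_num, Real.sqrt_sq zero_le_two]
  rw [two_mul_sqrt]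
  congr 2
  ring

lemma sqrt_le_nuclearNorm_vecMulVec_sub_vecMulVec (h : r ⬝ᵥ w = 0) :
    √((‖r‖₂ * ‖y‖₂) ^ 2 + (‖w‖₂ * ‖x‖₂) ^ 2) ≤ nuclearNorm (vecMulVec r y - vecMulVec w x) := by
  refine Real.sqrt_le_iff.mpr ⟨nuclearNorm_nonneg _, ?_⟩
  rw [nuclearNorm_vecMulVec_sub_vecMulVec_sq y x h, mul_pow, mul_pow]
  simp only [enorm_sq]
  linarith [Real.sqrt_nonneg ((r ⬝ᵥ r) * (w ⬝ᵥ w) * ((y ⬝ᵥ y) * (x ⬝ᵥ x) - (y ⬝ᵥ x) ^ 2))]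

lemma nuclearNorm_vecMulVec_sub_vecMulVec_le (h : r ⬝ᵥ w = 0) :
    nuclearNorm (vecMulVec r y - vecMulVec w x) ≤ ‖r‖₂ * ‖y‖₂ + ‖w‖₂ * ‖x‖₂ := by
  have hry := mul_nonneg (enorm_nonneg r) (enorm_nonneg y)
  have hwx := mul_nonneg (enorm_nonneg w) (enorm_nonneg x)
  refine (pow_le_pow_iff_left₀ (nuclearNorm_nonneg _) (add_nonneg hry hwx) two_ne_zero).mp ?_
  have hcross : √((r ⬝ᵥ r) * (w ⬝ᵥ w) * ((y ⬝ᵥ y) * (x ⬝ᵥ x) - (y ⬝ᵥ x) ^ 2)) ≤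
      ‖r‖₂ * ‖y‖₂ * (‖w‖₂ * ‖x‖₂) := by
    rw [← enorm_sq r, ← enorm_sq w, ← enorm_sq y, ← enorm_sq x]
    refine Real.sqrt_le_iff.mpr ⟨mul_nonneg hry hwx, ?_⟩
    nlinarith [mul_nonneg (sq_nonneg (‖r‖₂ * ‖w‖₂)) (sq_nonneg (y ⬝ᵥ x))]
  rw [nuclearNorm_vecMulVec_sub_vecMulVec_sq y x h]
  nlinarith [enorm_sq r, enorm_sq y, enorm_sq w, enorm_sq x]

end NuclearNorm

lemma specNorm_nonneg {m n : ℕ} (A : Matrix (Fin m) (Fin n) ℝ) : 0 ≤ specNorm A :=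
  Real.sSup_nonneg (by rintro _ ⟨x, -, rfl⟩; exact enorm_nonneg _)

section LeastSquares

variable {m n : ℕ} {A : Matrix (Fin m) (Fin n) ℝ}

lemma posDef_transpose_mul_self_of_rank_eq (hA : A.rank = n) : (Aᵀ * A).PosDef := by
  simpa using PosDef.conjTranspose_mul_self A
    (mulVec_injective_of_rank_eq_card (hA.trans (Fintype.card_fin n).symm))

lemma enorm_mulVec_sq (A : Matrix (Fin m) (Fin n) ℝ) (y : Fin n → ℝ) :
    ‖A *ᵥ y‖₂ ^ 2 = y ⬝ᵥ (Aᵀ * A) *ᵥ y := by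
  rw [enorm_sq, ← mulVec_mulVec, dotProduct_mulVec y Aᵀ, vecMul_transpose]

lemma sigmaMin_sq (A : Matrix (Fin m) (Fin n) ℝ) :
    sigmaMin A ^ 2 = ⨅ i, (posSemidef_transpose_mul_self A).isHermitian.eigenvalues i :=
  Real.sq_sqrt (Real.iInf_nonneg (posSemidef_transpose_mul_self A).eigenvalues_nonneg)

lemma sigmaMin_sq_mul_dotProduct_le (A : Matrix (Fin m) (Fin n) ℝ) (u : Fin n → ℝ) :
    sigmaMin A ^ 2 * (u ⬝ᵥ u) ≤ ‖A *ᵥ u‖₂ ^ 2 := by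
  rw [sigmaMin_sq, enorm_mulVec_sq]
  exact IsHermitian.iInf_eigenvalues_mul_dotProduct_self_le _ u

lemma exists_eigenvector_sigmaMin_sq [NeZero n] (A : Matrix (Fin m) (Fin n) ℝ) :
    ∃ u : Fin n → ℝ, ‖u‖₂ = 1 ∧ (Aᵀ * A) *ᵥ u = sigmaMin A ^ 2 • u := by
  have hC := (posSemidef_transpose_mul_self A).isHermitian
  obtain ⟨i, hi⟩ := exists_eq_ciInf_of_finite (f := hC.eigenvalues)
  refine ⟨hC.eigenvectorBasis i, ?_, ?_⟩
  · rw [enorm_ofLp, hC.eigenvectorBasis.orthonormal.1 i]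
  · rw [hC.mulVec_eigenvectorBasis, sigmaMin_sq, ← hi]

lemma sigmaMin_pos_of_rank_eq [NeZero n] (hA : A.rank = n) : 0 < sigmaMin A := by
  have hC := posDef_transpose_mul_self_of_rank_eq hA
  obtain ⟨i, hi⟩ := exists_eq_ciInf_of_finite (f := hC.isHermitian.eigenvalues)
  exact Real.sqrt_pos.mpr (hi ▸ hC.eigenvalues_pos i)

lemma residual_dotProduct_mulVec_eq_zero (hA : A.rank = n) (b : Fin m → ℝ) (z : Fin n → ℝ) :
    (b - A *ᵥ (((Aᵀ * A)⁻¹ * Aᵀ) *ᵥ b)) ⬝ᵥ A *ᵥ z = 0 := by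
  have hdet := (isUnit_iff_isUnit_det _).mp (posDef_transpose_mul_self_of_rank_eq hA).isUnit
  rw [dotProduct_mulVec, ← mulVec_transpose, mulVec_sub, mulVec_mulVec, mulVec_mulVec,
    ← Matrix.mul_assoc, mul_nonsing_inv _ hdet, Matrix.one_mul, sub_self, zero_dotProduct]

lemma enorm_inv_mulVec_le [NeZero n] (hA : A.rank = n) {Δ : Fin n → ℝ} (hΔ : ‖Δ‖₂ = 1) :
    ‖(Aᵀ * A)⁻¹ *ᵥ Δ‖₂ ≤ 1 / sigmaMin A ^ 2 ∧
      ‖A *ᵥ ((Aᵀ * A)⁻¹ *ᵥ Δ)‖₂ ≤ 1 / sigmaMin A := by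
  have hσ := sigmaMin_pos_of_rank_eq hA
  have hdet := (isUnit_iff_isUnit_det _).mp (posDef_transpose_mul_self_of_rank_eq hA).isUnit
  set y := (Aᵀ * A)⁻¹ *ᵥ Δ
  have hAy : ‖A *ᵥ y‖₂ ^ 2 ≤ ‖y‖₂ := by
    rw [enorm_mulVec_sq, mulVec_mulVec, mul_nonsing_inv _ hdet, one_mulVec]
    simpa [hΔ] using dotProduct_le_enorm_mul_enorm y Δ
  have hσy : sigmaMin A ^ 2 * ‖y‖₂ ^ 2 ≤ ‖A *ᵥ y‖₂ ^ 2 := by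
    rw [enorm_sq y]
    exact sigmaMin_sq_mul_dotProduct_le A y
  have hy : ‖y‖₂ ≤ 1 / sigmaMin A ^ 2 := by
    rw [le_div_iff₀ (by positivity)]
    nlinarith [enorm_nonneg y]
  refine ⟨hy, (pow_le_pow_iff_left₀ (enorm_nonneg _) (by positivity) two_ne_zero).mp ?_⟩
  rw [div_pow, one_pow]
  exact hAy.trans hy

lemma exists_enorm_inv_mulVec_eq [NeZero n] (hA : A.rank = n) :
    ∃ u : Fin n → ℝ, ‖u‖₂ = 1 ∧ ‖(Aᵀ * A)⁻¹ *ᵥ u‖₂ = 1 / sigmaMin A ^ 2 ∧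
      ‖A *ᵥ ((Aᵀ * A)⁻¹ *ᵥ u)‖₂ = 1 / sigmaMin A := by
  have hσ := sigmaMin_pos_of_rank_eq hA
  have := (posDef_transpose_mul_self_of_rank_eq hA).isUnit.invertible
  obtain ⟨u, hu, hCu⟩ := exists_eigenvector_sigmaMin_sq A
  have hy : (Aᵀ * A)⁻¹ *ᵥ u = (sigmaMin A ^ 2)⁻¹ • u := by
    refine inv_mulVec_eq_vec ?_
    rw [mulVec_smul, hCu, smul_smul, inv_mul_cancel₀ (by positivity), one_smul]
  have huu : u ⬝ᵥ u = 1 := by rw [← enorm_sq, hu, one_pow]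
  refine ⟨u, hu, ?_, ?_⟩ <;>
    refine (pow_left_inj₀ (enorm_nonneg _) (by positivity) two_ne_zero).mp ?_
  · rw [enorm_sq, hy, smul_dotProduct, dotProduct_smul, huu, smul_eq_mul, smul_eq_mul]
    field_simp
  · rw [enorm_mulVec_sq, mulVec_mulVec, mul_inv_of_invertible, one_mulVec, hy, smul_dotProduct, huu, smul_eq_mul]
    field_simp

-- For the least-squares solution `x` and residual `r`, the adjoint of the derivative of
-- `A ↦ (AᵀA)⁻¹Aᵀb`, applied to `Δx`.
noncomputable def lsDerivAdjoint (A : Matrix (Fin m) (Fin n) ℝ) (r : Fin m → ℝ) (x Δx : Fin n → ℝ) :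
    Matrix (Fin m) (Fin n) ℝ :=
  vecMulVec r ((Aᵀ * A)⁻¹ *ᵥ Δx) - vecMulVec (A *ᵥ ((Aᵀ * A)⁻¹ *ᵥ Δx)) x

variable [NeZero n] {r : Fin m → ℝ}

lemma nuclearNorm_lsDerivAdjoint_le (hA : A.rank = n) (hr : ∀ z, r ⬝ᵥ A *ᵥ z = 0)
    (x : Fin n → ℝ) {Δx : Fin n → ℝ} (hΔx : ‖Δx‖₂ = 1) :
    nuclearNorm (lsDerivAdjoint A r x Δx) ≤ ‖r‖₂ / sigmaMin A ^ 2 + ‖x‖₂ / sigmaMin A := by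
  obtain ⟨hy, hw⟩ := enorm_inv_mulVec_le hA hΔx
  calc _ ≤ ‖r‖₂ * ‖(Aᵀ * A)⁻¹ *ᵥ Δx‖₂ + ‖A *ᵥ ((Aᵀ * A)⁻¹ *ᵥ Δx)‖₂ * ‖x‖₂ :=
        nuclearNorm_vecMulVec_sub_vecMulVec_le _ x (hr _)
    _ ≤ ‖r‖₂ * (1 / sigmaMin A ^ 2) + 1 / sigmaMin A * ‖x‖₂ :=
        add_le_add (mul_le_mul_of_nonneg_left hy (enorm_nonneg r))
          (mul_le_mul_of_nonneg_right hw (enorm_nonneg x))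
    _ = _ := by ring

lemma exists_sqrt_le_nuclearNorm_lsDerivAdjoint (hA : A.rank = n)
    (hr : ∀ z, r ⬝ᵥ A *ᵥ z = 0) (x : Fin n → ℝ) :
    ∃ Δx : Fin n → ℝ, ‖Δx‖₂ = 1 ∧ √((‖r‖₂ / sigmaMin A ^ 2) ^ 2 + (‖x‖₂ / sigmaMin A) ^ 2) ≤
      nuclearNorm (lsDerivAdjoint A r x Δx) := by
  obtain ⟨u, hu, hy, hw⟩ := exists_enorm_inv_mulVec_eq hA
  refine ⟨u, hu, ?_⟩
  calc _ = √((‖r‖₂ * ‖(Aᵀ * A)⁻¹ *ᵥ u‖₂) ^ 2 + (‖A *ᵥ ((Aᵀ * A)⁻¹ *ᵥ u)‖₂ * ‖x‖₂) ^ 2) := by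
        rw [hy, hw]; ring_nf
    _ ≤ _ := sqrt_le_nuclearNorm_vecMulVec_sub_vecMulVec _ x (hr _)

lemma sSup_nuclearNorm_lsDerivAdjoint_mem_Icc (hA : A.rank = n)
    (hr : ∀ z, r ⬝ᵥ A *ᵥ z = 0) (x : Fin n → ℝ) :
    sSup {c | ∃ Δx : Fin n → ℝ, ‖Δx‖₂ = 1 ∧ c = nuclearNorm (lsDerivAdjoint A r x Δx)} ∈
      Set.Icc (√((‖r‖₂ / sigmaMin A ^ 2) ^ 2 + (‖x‖₂ / sigmaMin A) ^ 2))
        (‖r‖₂ / sigmaMin A ^ 2 + ‖x‖₂ / sigmaMin A) := by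
  have hbound : ∀ c ∈ {c | ∃ Δx : Fin n → ℝ, ‖Δx‖₂ = 1 ∧
      c = nuclearNorm (lsDerivAdjoint A r x Δx)}, c ≤ ‖r‖₂ / sigmaMin A ^ 2 + ‖x‖₂ / sigmaMin A := by
    rintro _ ⟨Δx, hΔx, rfl⟩
    exact nuclearNorm_lsDerivAdjoint_le hA hr x hΔx
  obtain ⟨u, hu, hlow⟩ := exists_sqrt_le_nuclearNorm_lsDerivAdjoint hA hr x
  exact ⟨hlow.trans (le_csSup ⟨_, hbound⟩ ⟨u, hu, rfl⟩), csSup_le ⟨_, u, hu, rfl⟩ hbound⟩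

end LeastSquares

lemma div_mul_sqrt_sq_add_one {a s ρ ξ : ℝ} (hs : 0 < s) (hξ : 0 < ξ) :
    a / s * √((ρ / (ξ * s)) ^ 2 + 1) = a / ξ * √((ρ / s ^ 2) ^ 2 + (ξ / s) ^ 2) := by
  have hfactor : (ρ / s ^ 2) ^ 2 + (ξ / s) ^ 2 = (ξ / s) ^ 2 * ((ρ / (ξ * s)) ^ 2 + 1) := by
    field_simp
  rw [hfactor, Real.sqrt_mul (by positivity), Real.sqrt_sq (by positivity)]
  field_simp

/-- The condition number `χ_x(A)` of the full-column-rank least-squares solution with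
respect to `A` (in scaled 2-norms), given as an optimization of nuclear norms of rank-2
matrices, satisfies `κ √((v tan θ)² + 1) ≤ χ_x(A) ≤ κ (v tan θ + 1)` where
`κ = ‖A‖₂/σ_min`, `v = ‖Ax‖₂/(‖x‖₂σ_min)`, `tan θ = ‖r‖₂/‖Ax‖₂`. -/
theorem condition_number_wrt_A_bounds {m n : ℕ} (A : Matrix (Fin m) (Fin n) ℝ)
    (hrank : A.rank = n) (b : Fin m → ℝ)
    (x : Fin n → ℝ) (hx : x = ((Aᵀ * A)⁻¹ * Aᵀ).mulVec b) (hx0 : x ≠ 0)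
    (r : Fin m → ℝ) (hr : r = b - A.mulVec x)
    (κ v t χ : ℝ)
    (hκ : κ = specNorm A / sigmaMin A)
    (hv : v = _root_.enorm (A.mulVec x) / (_root_.enorm x * sigmaMin A))
    (ht : t = _root_.enorm r / _root_.enorm (A.mulVec x))
    (hχ : χ = (specNorm A / _root_.enorm x) *
        sSup {c | ∃ Δx : Fin n → ℝ, _root_.enorm Δx = 1 ∧
          c = nuclearNorm (vecMulVec r ((Aᵀ * A)⁻¹.mulVec Δx)
                - vecMulVec (A.mulVec ((Aᵀ * A)⁻¹.mulVec Δx)) x)}) :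
    κ * Real.sqrt ((v * t) ^ 2 + 1) ≤ χ ∧ χ ≤ κ * (v * t + 1) := by
  have : NeZero n := ⟨by rintro rfl; exact hx0 (Subsingleton.elim _ _)⟩
  have hσ := sigmaMin_pos_of_rank_eq hrank
  have hAx : A *ᵥ x ≠ 0 := fun h =>
    hx0 (mulVec_injective_of_rank_eq_card (hrank.trans (Fintype.card_fin n).symm)
      (h.trans (mulVec_zero A).symm))
  have horth (z : Fin n → ℝ) : r ⬝ᵥ A *ᵥ z = 0 := by
    rw [hr, hx]
    exact residual_dotProduct_mulVec_eq_zero hrank b z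
  obtain ⟨hlower, hupper⟩ := sSup_nuclearNorm_lsDerivAdjoint_mem_Icc hrank horth x
  have hvt : v * t = ‖r‖₂ / (‖x‖₂ * sigmaMin A) := by
    rw [hv, ht]
    field_simp [(enorm_pos_of_ne_zero hAx).ne']
  have hxpos := enorm_pos_of_ne_zero hx0
  have hscale : 0 ≤ specNorm A / ‖x‖₂ := div_nonneg (specNorm_nonneg A) hxpos.le
  rw [hκ, hχ, hvt, div_mul_sqrt_sq_add_one hσ hxpos]
  refine ⟨mul_le_mul_of_nonneg_left hlower hscale, ?_⟩
  calc _ ≤ specNorm A / ‖x‖₂ * (‖r‖₂ / sigmaMin A ^ 2 + ‖x‖₂ / sigmaMin A) :=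
        mul_le_mul_of_nonneg_left hupper hscale
    _ = _ := by field_simp
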